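/- arXiv:math/0603351 — 2 statements merged into one kernel-verified Lean document; each statement's English description precedes it below -/
import Mathlib

section
/- Let F_n (n ∈ ℕ) and F be linear functionals on the real vector space of dynamic functions on I, each 𝒯-sequentially continuous, with F_n(ψ) → F(ψ) for every dynamic test function ψ. Let g_n (n ∈ ℕ) and g be dynamic functions on I, each bounded on I × J with one-sided uniform limits existing at every point of I, with sup_{t ∈ I, s ∈ J} |g_n(t)(s) − g(t)(s)| → 0. Then for every dynamic test function φ, F_n(g_nφ) → F(gφ) as n → ∞, where products are pointwise: (gφ)(t)(s) = g(t)(s)·φ(t)(s). (In the notation of the paper: if f_n → f in 𝒯′ and g_n → g in dG, then g_nf_n → gf in 𝒯′.) -/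
open Set Filter Topology MeasureTheory

noncomputable section

/-- `J = [-1/2, 1/2]`. -/
def Jset : Set ℝ := Set.Icc (-(1:ℝ)/2) (1/2)

/-- A dynamic function `f` on `I = (a,b)` tends to `c` from the right at `τ`
(uniformly in `s ∈ J`). -/
def RightLim (a b : ℝ) (f : ℝ → ℝ → ℝ) (τ c : ℝ) : Prop :=
  ∀ ε > 0, ∃ η > 0, ∀ t ∈ Set.Ioo a b, t ∈ Set.Ioo τ (τ + η) → ∀ s ∈ Jset, |f t s - c| < ε

/-- A dynamic function `f` on `I = (a,b)` tends to `c` from the left at `τ`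
(uniformly in `s ∈ J`). -/
def LeftLim (a b : ℝ) (f : ℝ → ℝ → ℝ) (τ c : ℝ) : Prop :=
  ∀ ε > 0, ∃ η > 0, ∀ t ∈ Set.Ioo a b, t ∈ Set.Ioo (τ - η) τ → ∀ s ∈ Jset, |f t s - c| < ε

/-- `f` is bounded on `I × J`. -/
def BddOn (a b : ℝ) (f : ℝ → ℝ → ℝ) : Prop :=
  ∃ M, ∀ t ∈ Set.Ioo a b, ∀ s ∈ Jset, |f t s| ≤ M

/-- The one-sided uniform limits of `f` exist at every point of `I = (a,b)`. -/
def HasSidedLimits (a b : ℝ) (f : ℝ → ℝ → ℝ) : Prop :=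
  ∀ τ ∈ Set.Ioo a b, (∃ c, RightLim a b f τ c) ∧ (∃ c, LeftLim a b f τ c)

/-- The support of the dynamic function `f` is contained in the compact
interval `[c,d] ⊂ (a,b)`. -/
def SuppIn (a b : ℝ) (f : ℝ → ℝ → ℝ) (c d : ℝ) : Prop :=
  a < c ∧ c ≤ d ∧ d < b ∧ ∀ t ∉ Set.Icc c d, ∀ s ∈ Jset, f t s = 0

/-- `φ` is a dynamic test function on `I = (a,b)`. -/
def IsDynTest (a b : ℝ) (φ : ℝ → ℝ → ℝ) : Prop :=
  BddOn a b φ ∧ HasSidedLimits a b φ ∧ ∃ c d, SuppIn a b φ c d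

/-- Convergence of a sequence of dynamic test functions in the space `𝒯`:
common compact support in `I` and uniform convergence on `I × J`. -/
def TendstoT (a b : ℝ) (φn : ℕ → ℝ → ℝ → ℝ) (φ : ℝ → ℝ → ℝ) : Prop :=
  (∃ c d, a < c ∧ c ≤ d ∧ d < b ∧ ∀ n, ∀ t ∉ Set.Icc c d, ∀ s ∈ Jset, φn n t s = 0) ∧
  ∀ ε > 0, ∃ N, ∀ n ≥ N, ∀ t ∈ Set.Ioo a b, ∀ s ∈ Jset, |φn n t s - φ t s| < ε

/-- A functional on dynamic functions is `𝒯`-sequentially continuous. -/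
def SeqContT (a b : ℝ) (F : (ℝ → ℝ → ℝ) → ℝ) : Prop :=
  ∀ (φn : ℕ → ℝ → ℝ → ℝ) (φ : ℝ → ℝ → ℝ),
    (∀ n, IsDynTest a b (φn n)) → IsDynTest a b φ → TendstoT a b φn φ →
      Filter.Tendsto (fun n => F (φn n)) Filter.atTop (nhds (F φ))

/-!
Fix the support `[c, d]` of `φ`. Test functions supported in `[c, d]`, seen through their
values on `I × J`, form a closed subspace `E` of `ℓ^∞(ℝ × ℝ)`: by the Moore–Osgood argument,
uniform limits keep their one-sided limits. On the Banach space `E` every `Fₙ` is continuous and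
the `Fₙ` converge pointwise, so by Banach–Steinhaus they are uniformly bounded. Since
`gₙφ → gφ` in `E`, this gives `Fₙ(gₙφ) - Fₙ(gφ) → 0`, while `Fₙ(gφ) → F(gφ)`.
-/

open Function
open scoped ENNReal lp

theorem TendstoUniformlyOnFilter.exists_tendsto {ι α β : Type*} [UniformSpace β]
    [CompleteSpace β] {F : ι → α → β} {f : α → β} {p : Filter ι} {l : Filter α} [p.NeBot]
    [l.NeBot] (hF : TendstoUniformlyOnFilter F f p l)
    (h : ∀ᶠ i in p, ∃ c, Tendsto (F i) l (𝓝 c)) : ∃ c, Tendsto f l (𝓝 c) := by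
  refine cauchy_map_iff_exists_tendsto.1 (cauchy_map_iff'.2 fun U hU => ?_)
  obtain ⟨V, hV, hVU⟩ := comp3_mem_uniformity hU
  have hclose : ∀ᶠ i in p, ∀ᶠ x in l, (f x, F i x) ∈ V ∧ (F i x, f x) ∈ V :=
    (hF _ (inter_mem hV (symm_le_uniformity hV))).curry
  have hcauchy : ∀ᶠ i in p, ∀ᶠ q in l ×ˢ l, (F i q.1, F i q.2) ∈ V := by
    filter_upwards [h] with i ⟨c, hc⟩ using cauchy_map_iff'.1 hc.cauchy_map hV
  obtain ⟨i, hi, hi'⟩ := (hclose.and hcauchy).exists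
  show ∀ᶠ q in l ×ˢ l, (f q.1, f q.2) ∈ U
  filter_upwards [hi.prod_mk hi, hi'] with q hq hq'
  exact hVU ⟨F i q.1, hq.1.1, F i q.2, hq', hq.2.2⟩

theorem tendsto_clm_apply_of_tendsto_pointwise {𝕜 E F : Type*} [NontriviallyNormedField 𝕜]
    [SeminormedAddCommGroup E] [NormedSpace 𝕜 E] [CompleteSpace E] [SeminormedAddCommGroup F]
    [NormedSpace 𝕜 F] {T : ℕ → E →L[𝕜] F} {L : E → F}
    (hT : ∀ x, Tendsto (fun n => T n x) atTop (𝓝 (L x))) {x : ℕ → E} {x₀ : E}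
    (hx : Tendsto x atTop (𝓝 x₀)) : Tendsto (fun n => T n (x n)) atTop (𝓝 (L x₀)) := by
  obtain ⟨C, hC⟩ := banach_steinhaus fun y =>
    let ⟨C, hC⟩ := (hT y).norm.bddAbove_range
    ⟨C, fun n => hC ⟨n, rfl⟩⟩
  have hsmall : Tendsto (fun n => T n (x n - x₀)) atTop (𝓝 0) :=
    squeeze_zero_norm (fun n => (T n).le_of_opNorm_le (hC n) _)
      (by simpa using (tendsto_iff_norm_sub_tendsto_zero.1 hx).const_mul C)
  simpa using hsmall.add (hT x₀)

lemma tendstoUniformly_of_tendsto_lp_infty {ι α E : Type*} [NormedAddCommGroup E] {l : Filter ι}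
    {u : ι → lp (fun _ : α => E) ∞} {v : lp (fun _ : α => E) ∞} (h : Tendsto u l (𝓝 v)) :
    TendstoUniformly (fun i => ⇑(u i)) v l := by
  refine Metric.tendstoUniformly_iff.2 fun ε hε =>
    (Metric.tendsto_nhds.1 h ε hε).mono fun i hi x => ?_
  calc dist (v x) (u i x) = ‖(u i - v) x‖ := by
        rw [dist_comm, dist_eq_norm, lp.coeFn_sub, Pi.sub_apply]
    _ ≤ ‖u i - v‖ := lp.norm_apply_le_norm ENNReal.top_ne_zero _ x
    _ < ε := by rwa [← dist_eq_norm]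

lemma TendstoUniformlyOn.mul_of_bdd {ι α : Type*} {p : Filter ι} {S : Set α} {F : ι → α → ℝ}
    {f g : α → ℝ} (hF : TendstoUniformlyOn F f p S) (hg : ∃ M, ∀ x ∈ S, |g x| ≤ M) :
    TendstoUniformlyOn (fun i x => F i x * g x) (fun x => f x * g x) p S := by
  obtain ⟨M, hM⟩ := hg
  have hK : 0 < max M 1 := lt_max_of_lt_right one_pos
  refine Metric.tendstoUniformlyOn_iff.2 fun ε hε => ?_
  filter_upwards [Metric.tendstoUniformlyOn_iff.1 hF (ε / max M 1) (div_pos hε hK)] with i hi x hx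
  rw [Real.dist_eq, ← sub_mul, abs_mul, ← Real.dist_eq]
  calc dist (f x) (F i x) * |g x| ≤ dist (f x) (F i x) * max M 1 :=
        mul_le_mul_of_nonneg_left ((hM x hx).trans (le_max_left _ _)) dist_nonneg
    _ < ε / max M 1 * max M 1 := mul_lt_mul_of_pos_right (hi x hx) hK
    _ = ε := div_mul_cancel₀ ε hK.ne'

lemma tendsto_prod_principal_Jset_iff {f : ℝ → ℝ → ℝ} {l : Filter ℝ} {ℓ : ℝ} :
    Tendsto (uncurry f) (l ×ˢ 𝓟 Jset) (𝓝 ℓ) ↔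
      ∀ ε > 0, ∀ᶠ t in l, ∀ s ∈ Jset, |f t s - ℓ| < ε := by
  refine tendsto_prod_principal_iff.trans (Metric.tendstoUniformlyOn_iff.trans ?_)
  simp only [Real.dist_eq, abs_sub_comm ℓ]

variable {a b c d : ℝ} {f : ℝ → ℝ → ℝ}

lemma rightLim_iff_tendsto {τ ℓ : ℝ} (hτ : τ ∈ Ioo a b) :
    RightLim a b f τ ℓ ↔ Tendsto (uncurry f) (𝓝[>] τ ×ˢ 𝓟 Jset) (𝓝 ℓ) := by
  rw [tendsto_prod_principal_Jset_iff]
  refine forall₂_congr fun ε _ => ⟨?_, fun h => ?_⟩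
  · rintro ⟨η, hη, h⟩
    filter_upwards [nhdsWithin_le_nhds (Ioo_mem_nhds hτ.1 hτ.2),
      Ioo_mem_nhdsGT (lt_add_of_pos_right τ hη)] with t ht ht' using h t ht ht'
  · obtain ⟨u, hu, hsub⟩ := mem_nhdsGT_iff_exists_Ioo_subset.1 h
    exact ⟨u - τ, sub_pos.2 hu, fun t _ ht => hsub (by rwa [add_sub_cancel] at ht)⟩

lemma leftLim_iff_tendsto {τ ℓ : ℝ} (hτ : τ ∈ Ioo a b) :
    LeftLim a b f τ ℓ ↔ Tendsto (uncurry f) (𝓝[<] τ ×ˢ 𝓟 Jset) (𝓝 ℓ) := by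
  rw [tendsto_prod_principal_Jset_iff]
  refine forall₂_congr fun ε _ => ⟨?_, fun h => ?_⟩
  · rintro ⟨η, hη, h⟩
    filter_upwards [nhdsWithin_le_nhds (Ioo_mem_nhds hτ.1 hτ.2),
      Ioo_mem_nhdsLT (sub_lt_self τ hη)] with t ht ht' using h t ht ht'
  · obtain ⟨u, hu, hsub⟩ := mem_nhdsLT_iff_exists_Ioo_subset.1 h
    exact ⟨τ - u, sub_pos.2 hu, fun t _ ht => hsub (by rwa [sub_sub_cancel] at ht)⟩

/-- `l ×ˢ 𝓟 Jset` encodes limits along `l` that are uniform in `s ∈ J`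
(`tendsto_prod_principal_Jset_iff`). -/
def IsRegulatedOn (a b : ℝ) (u : ℝ × ℝ → ℝ) : Prop :=
  ∀ τ ∈ Ioo a b, ∀ l ∈ ({𝓝[>] τ, 𝓝[<] τ} : Set (Filter ℝ)),
    ∃ c, Tendsto u (l ×ˢ 𝓟 Jset) (𝓝 c)

lemma hasSidedLimits_iff_isRegulatedOn :
    HasSidedLimits a b f ↔ IsRegulatedOn a b (uncurry f) := by
  refine forall₂_congr fun τ hτ => ?_
  simp only [mem_insert_iff, mem_singleton_iff, forall_eq_or_imp, forall_eq,
    rightLim_iff_tendsto hτ, leftLim_iff_tendsto hτ]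

namespace IsRegulatedOn

variable {u v : ℝ × ℝ → ℝ}

lemma zero : IsRegulatedOn a b 0 := fun _ _ _ _ => ⟨0, tendsto_const_nhds⟩

lemma add (hu : IsRegulatedOn a b u) (hv : IsRegulatedOn a b v) : IsRegulatedOn a b (u + v) :=
  fun τ hτ l hl =>
    let ⟨c, hc⟩ := hu τ hτ l hl
    let ⟨c', hc'⟩ := hv τ hτ l hl
    ⟨c + c', hc.add hc'⟩

lemma mul (hu : IsRegulatedOn a b u) (hv : IsRegulatedOn a b v) : IsRegulatedOn a b (u * v) :=
  fun τ hτ l hl =>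
    let ⟨c, hc⟩ := hu τ hτ l hl
    let ⟨c', hc'⟩ := hv τ hτ l hl
    ⟨c * c', hc.mul hc'⟩

lemma const_smul (r : ℝ) (hu : IsRegulatedOn a b u) : IsRegulatedOn a b (r • u) :=
  fun τ hτ l hl =>
    let ⟨c, hc⟩ := hu τ hτ l hl
    ⟨r • c, hc.const_smul r⟩

lemma congr (hu : IsRegulatedOn a b u) (huv : EqOn u v (Ioo a b ×ˢ Jset)) :
    IsRegulatedOn a b v := by
  intro τ hτ l hl
  obtain ⟨c, hc⟩ := hu τ hτ l hl
  have hl : l ≤ 𝓝 τ := by rcases hl with rfl | rfl <;> exact nhdsWithin_le_nhds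
  exact ⟨c, hc.congr' (mem_of_superset (prod_mem_prod (hl (Ioo_mem_nhds hτ.1 hτ.2))
    (mem_principal_self _)) huv)⟩

lemma of_tendstoUniformly {u : ℕ → ℝ × ℝ → ℝ} (hu : ∀ n, IsRegulatedOn a b (u n))
    (huv : TendstoUniformly u v atTop) : IsRegulatedOn a b v := by
  intro τ hτ l hl
  have : (𝓟 Jset).NeBot := principal_neBot_iff.2 ⟨0, by norm_num [Jset]⟩
  have : l.NeBot := by rcases hl with rfl | rfl <;> infer_instance
  exact (huv.tendstoUniformlyOnFilter.mono_right le_top).exists_tendsto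
    (Eventually.of_forall fun n => hu n τ hτ l hl)

end IsRegulatedOn

lemma tendstoUniformlyOn_Ioo_prod_Jset_iff {fn : ℕ → ℝ → ℝ → ℝ} :
    TendstoUniformlyOn (fun n => uncurry (fn n)) (uncurry f) atTop (Ioo a b ×ˢ Jset) ↔
      ∀ ε > 0, ∃ N, ∀ n ≥ N, ∀ t ∈ Ioo a b, ∀ s ∈ Jset, |fn n t s - f t s| < ε := by
  simp only [Metric.tendstoUniformlyOn_iff, eventually_atTop, Prod.forall, mem_prod, and_imp,
    uncurry_apply_pair, Real.dist_eq, ge_iff_le, abs_sub_comm (f _ _)]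
  exact forall₂_congr fun _ _ => exists_congr fun _ => forall₂_congr fun _ _ =>
    ⟨fun h t ht s hs => h t s ht hs, fun h t s ht hs => h t ht s hs⟩

/-- Models the test functions supported in `[c, d]` by their values on `I × J` (`ofBddOn`);
values elsewhere are invisible to `𝒯`-sequentially continuous functionals
(`SeqContT.eq_of_eqOn`). -/
def testSubspace (a b c d : ℝ) : Submodule ℝ ℓ^∞(ℝ × ℝ, ℝ) where
  carrier := {u | IsRegulatedOn a b u ∧ EqOn u 0 ((Icc c d)ᶜ ×ˢ Jset)}
  add_mem' {u v} hu hv := by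
    refine ⟨lp.coeFn_add u v ▸ hu.1.add hv.1, fun x hx => ?_⟩
    simp [hu.2 hx, hv.2 hx]
  zero_mem' := ⟨IsRegulatedOn.zero, fun _ _ => rfl⟩
  smul_mem' r u hu := by
    refine ⟨lp.coeFn_smul r u ▸ hu.1.const_smul r, fun x hx => ?_⟩
    simp [hu.2 hx]

lemma isClosed_testSubspace : IsClosed (testSubspace a b c d : Set ℓ^∞(ℝ × ℝ, ℝ)) := by
  refine IsSeqClosed.isClosed fun u v hu huv => ?_
  have hunif := tendstoUniformly_of_tendsto_lp_infty huv
  refine ⟨IsRegulatedOn.of_tendstoUniformly (fun n => (hu n).1) hunif, fun x hx => ?_⟩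
  exact tendsto_nhds_unique (hunif.tendsto_at x)
    (tendsto_const_nhds.congr fun n => ((hu n).2 hx).symm)

def lpCurry : ℓ^∞(ℝ × ℝ, ℝ) →ₗ[ℝ] (ℝ → ℝ → ℝ) where
  toFun u := curry u
  map_add' _ _ := rfl
  map_smul' _ _ := rfl

lemma isDynTest_lpCurry (hac : a < c) (hcd : c ≤ d) (hdb : d < b)
    {u : ℓ^∞(ℝ × ℝ, ℝ)} (hu : u ∈ testSubspace a b c d) : IsDynTest a b (lpCurry u) :=
  ⟨⟨‖u‖, fun _ _ _ _ => lp.norm_apply_le_norm ENNReal.top_ne_zero u _⟩,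
    hasSidedLimits_iff_isRegulatedOn.2 hu.1,
    c, d, hac, hcd, hdb, fun _ ht _ hs => hu.2 (mk_mem_prod ht hs)⟩

lemma SeqContT.continuous_lpCurry {G : (ℝ → ℝ → ℝ) → ℝ} (hG : SeqContT a b G)
    (hac : a < c) (hcd : c ≤ d) (hdb : d < b) :
    Continuous fun u : testSubspace a b c d => G (lpCurry u) := by
  refine continuous_iff_seqContinuous.2 fun u v huv => hG _ _
    (fun n => isDynTest_lpCurry hac hcd hdb (u n).2) (isDynTest_lpCurry hac hcd hdb v.2)
    ⟨⟨c, d, hac, hcd, hdb, fun n t ht s hs => (u n).2.2 (mk_mem_prod ht hs)⟩, ?_⟩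
  exact tendstoUniformlyOn_Ioo_prod_Jset_iff.1
    (tendstoUniformly_of_tendsto_lp_infty (tendsto_subtype_rng.1 huv)).tendstoUniformlyOn

lemma SeqContT.eq_of_eqOn {G : (ℝ → ℝ → ℝ) → ℝ} (hG : SeqContT a b G) {φ ψ : ℝ → ℝ → ℝ}
    (hφ : IsDynTest a b φ) (hψ : IsDynTest a b ψ)
    (h : ∀ t ∈ Ioo a b, ∀ s ∈ Jset, φ t s = ψ t s) : G φ = G ψ := by
  obtain ⟨c, d, hac, hcd, hdb, hφ0⟩ := hφ.2.2
  refine tendsto_nhds_unique tendsto_const_nhds (hG _ _ (fun _ => hφ) hψ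
    ⟨⟨c, d, hac, hcd, hdb, fun _ => hφ0⟩, fun ε hε => ⟨0, fun n _ t ht s hs => ?_⟩⟩)
  simpa [h t ht s hs] using hε

section Products

variable {g φ : ℝ → ℝ → ℝ}

lemma BddOn.mul (hg : BddOn a b g) (hφ : BddOn a b φ) :
    BddOn a b (fun t s => g t s * φ t s) := by
  obtain ⟨M, hM⟩ := hg
  obtain ⟨M', hM'⟩ := hφ
  refine ⟨M * M', fun t ht s hs => ?_⟩
  rw [abs_mul]
  exact mul_le_mul (hM t ht s hs) (hM' t ht s hs) (abs_nonneg _)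
    ((abs_nonneg _).trans (hM t ht s hs))

lemma HasSidedLimits.mul (hg : HasSidedLimits a b g) (hφ : HasSidedLimits a b φ) :
    HasSidedLimits a b (fun t s => g t s * φ t s) :=
  hasSidedLimits_iff_isRegulatedOn.2
    ((hasSidedLimits_iff_isRegulatedOn.1 hg).mul (hasSidedLimits_iff_isRegulatedOn.1 hφ))

lemma SuppIn.mul_left (g : ℝ → ℝ → ℝ) (hφ : SuppIn a b φ c d) :
    SuppIn a b (fun t s => g t s * φ t s) c d :=
  ⟨hφ.1, hφ.2.1, hφ.2.2.1, fun t ht s hs => by simp [hφ.2.2.2 t ht s hs]⟩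

end Products

def ofBddOn (hf : BddOn a b f) : ℓ^∞(ℝ × ℝ, ℝ) :=
  ⟨(Ioo a b ×ˢ Jset).indicator (uncurry f), memℓp_infty <| by
    obtain ⟨M, hM⟩ := hf
    refine ⟨max M 0, forall_mem_range.2 fun x => ?_⟩
    by_cases hx : x ∈ Ioo a b ×ˢ Jset
    · rw [indicator_of_mem hx, Real.norm_eq_abs]
      exact (hM x.1 hx.1 x.2 hx.2).trans (le_max_left _ _)
    · simp [indicator_of_notMem hx]⟩

lemma lpCurry_ofBddOn (hf : BddOn a b f) {t s : ℝ} (ht : t ∈ Ioo a b) (hs : s ∈ Jset) :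
    lpCurry (ofBddOn hf) t s = f t s :=
  indicator_of_mem (mk_mem_prod ht hs) _

lemma ofBddOn_mem (hf : BddOn a b f) (hreg : HasSidedLimits a b f)
    (hsupp : SuppIn a b f c d) : ofBddOn hf ∈ testSubspace a b c d := by
  refine ⟨(hasSidedLimits_iff_isRegulatedOn.1 hreg).congr fun x hx => ?_, fun x hx => ?_⟩
  · exact (indicator_of_mem hx _).symm
  · by_cases hxI : x ∈ Ioo a b ×ˢ Jset
    · exact (indicator_of_mem hxI _).trans (hsupp.2.2.2 x.1 hx.1 x.2 hx.2)
    · exact indicator_of_notMem hxI _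

lemma SeqContT.map_lpCurry_ofBddOn {G : (ℝ → ℝ → ℝ) → ℝ} (hG : SeqContT a b G)
    (hf : BddOn a b f) (hreg : HasSidedLimits a b f) (hsupp : SuppIn a b f c d) :
    G (lpCurry (ofBddOn hf)) = G f :=
  hG.eq_of_eqOn (isDynTest_lpCurry hsupp.1 hsupp.2.1 hsupp.2.2.1 (ofBddOn_mem hf hreg hsupp))
    ⟨hf, hreg, c, d, hsupp⟩ fun _ ht _ hs => lpCurry_ofBddOn hf ht hs

lemma tendsto_ofBddOn {fn : ℕ → ℝ → ℝ → ℝ} (hfn : ∀ n, BddOn a b (fn n)) (hf : BddOn a b f)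
    (h : TendstoUniformlyOn (fun n => uncurry (fn n)) (uncurry f) atTop (Ioo a b ×ˢ Jset)) :
    Tendsto (fun n => ofBddOn (hfn n)) atTop (𝓝 (ofBddOn hf)) := by
  refine Metric.tendsto_nhds.2 fun ε hε => ?_
  filter_upwards [Metric.tendstoUniformlyOn_iff.1 h (ε / 2) (half_pos hε)] with n hn
  rw [dist_eq_norm]
  refine (lp.norm_le_of_forall_le (half_pos hε).le fun x => ?_).trans_lt (half_lt_self hε)
  rw [lp.coeFn_sub, Pi.sub_apply]
  by_cases hx : x ∈ Ioo a b ×ˢ Jset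
  · rw [← dist_eq_norm, dist_comm]
    simpa [ofBddOn, indicator_of_mem hx] using (hn x hx).le
  · simpa [ofBddOn, indicator_of_notMem hx] using (half_pos hε).le

/-- continuity of multiplication in `𝒯'`: if `fₙ → f` in `𝒯'` and
`gₙ → g` uniformly on `I × J` (all `gₙ, g` bounded dynamic regulated), then
`gₙfₙ → gf` in `𝒯'`, i.e. `Fₙ(gₙφ) → F(gφ)` for every dynamic test function `φ`. -/
theorem stmt_10 (a b : ℝ) (F : ℕ → (ℝ → ℝ → ℝ) →ₗ[ℝ] ℝ) (Fl : (ℝ → ℝ → ℝ) →ₗ[ℝ] ℝ)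
    (hcontn : ∀ n, SeqContT a b (F n)) (hcontF : SeqContT a b Fl)
    (hFconv : ∀ ψ, IsDynTest a b ψ →
      Filter.Tendsto (fun n => F n ψ) Filter.atTop (nhds (Fl ψ)))
    (gn : ℕ → ℝ → ℝ → ℝ) (g : ℝ → ℝ → ℝ)
    (hgn : ∀ n, BddOn a b (gn n) ∧ HasSidedLimits a b (gn n))
    (hg : BddOn a b g ∧ HasSidedLimits a b g)
    (hgconv : ∀ ε > 0, ∃ N, ∀ n ≥ N, ∀ t ∈ Set.Ioo a b, ∀ s ∈ Jset, |gn n t s - g t s| < ε)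
    (φ : ℝ → ℝ → ℝ) (hφ : IsDynTest a b φ) :
    Filter.Tendsto (fun n => F n (fun t s => gn n t s * φ t s)) Filter.atTop
      (nhds (Fl (fun t s => g t s * φ t s))) := by
  obtain ⟨hφb, hφr, c, d, hφs⟩ := hφ
  have ⟨hac, hcd, hdb, _⟩ := hφs
  let E := testSubspace a b c d
  have : CompleteSpace E := isClosed_testSubspace.completeSpace_coe
  let T : ℕ → E →L[ℝ] ℝ := fun n =>
    ⟨(F n).comp (lpCurry.comp E.subtype), (hcontn n).continuous_lpCurry hac hcd hdb⟩
  have hmem {h : ℝ → ℝ → ℝ} (hh : BddOn a b h ∧ HasSidedLimits a b h) :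
      ofBddOn (hh.1.mul hφb) ∈ E :=
    ofBddOn_mem _ (hh.2.mul hφr) (hφs.mul_left h)
  have heval {G : (ℝ → ℝ → ℝ) → ℝ} (hG : SeqContT a b G) {h : ℝ → ℝ → ℝ}
      (hh : BddOn a b h ∧ HasSidedLimits a b h) :
      G (lpCurry (ofBddOn (hh.1.mul hφb))) = G fun t s => h t s * φ t s :=
    hG.map_lpCurry_ofBddOn _ (hh.2.mul hφr) (hφs.mul_left h)
  have hψ : Tendsto (fun n => (⟨_, hmem (hgn n)⟩ : E)) atTop (𝓝 ⟨_, hmem hg⟩) := by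
    have ⟨M, hM⟩ := hφb
    exact tendsto_subtype_rng.2 <|
      tendsto_ofBddOn (fun n => (hgn n).1.mul hφb) (hg.1.mul hφb) <|
        (tendstoUniformlyOn_Ioo_prod_Jset_iff.2 hgconv).mul_of_bdd
          ⟨M, fun x hx => hM x.1 hx.1 x.2 hx.2⟩
  rw [← heval hcontF hg]
  exact (tendsto_clm_apply_of_tendsto_pointwise (T := T)
    (fun u => hFconv _ (isDynTest_lpCurry hac hcd hdb u.2)) hψ).congr
      fun n => heval (hcontn n) (hgn n)
end
end

section
/- Let f : I → ℝ be a measurable function that is bounded on every compact subinterval of I. Let φ_n (n ∈ ℕ) and φ be dynamic test functions such that the functions t ↦ φ_n(t)(0) and t ↦ φ(t)(0) are measurable on I, and φ_n → φ in 𝒯. Then ∫_I f(t) φ_n(t)(0) dt → ∫_I f(t) φ(t)(0) dt as n → ∞. That is, the regular distribution associated to f, defined by (f, φ) = ∫_I f(t) φ̂(t) dt where φ̂ is the ordinary part of the test function, is a 𝒯-sequentially continuous functional. -/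
open Set Filter Topology MeasureTheory

noncomputable section

/-
The regular distribution is an integral against `f` of test functions that all vanish off
one compact interval `[c, d]` on which `f` is bounded; uniform convergence makes them
eventually uniformly bounded, so dominated convergence applies with the dominating function
`M (B + 1) · 𝟙_[c,d]`.
-/

theorem zero_mem_Jset : (0 : ℝ) ∈ Jset := by
  constructor <;> norm_num

theorem TendstoT.tendstoUniformlyOn {a b : ℝ} {φn : ℕ → ℝ → ℝ → ℝ} {φ : ℝ → ℝ → ℝ}
    (h : TendstoT a b φn φ) {s : ℝ} (hs : s ∈ Jset) :
    TendstoUniformlyOn (fun n t => φn n t s) (fun t => φ t s) atTop (Ioo a b) :=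
  Metric.tendstoUniformlyOn_iff.2 fun ε hε => by
    obtain ⟨N, hN⟩ := h.2 ε hε
    filter_upwards [eventually_ge_atTop N] with n hn t ht
    rw [dist_comm, Real.dist_eq]
    exact hN n hn t ht s hs

theorem eventually_abs_le_of_tendstoUniformlyOn {α ι : Type*} {l : Filter ι} {s : Set α}
    {v : α → ℝ} {u : ι → α → ℝ} {B : ℝ} (hv : ∀ x ∈ s, |v x| ≤ B)
    (hu : TendstoUniformlyOn u v l s) : ∀ᶠ i in l, ∀ x ∈ s, |u i x| ≤ B + 1 := by
  filter_upwards [Metric.tendstoUniformlyOn_iff.1 hu 1 one_pos] with i hi x hx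
  calc |u i x| ≤ |v x| + 1 := norm_le_norm_add_const_of_dist_le (dist_comm (v x) _ ▸ (hi x hx).le)
    _ ≤ B + 1 := by linarith [hv x hx]

theorem tendsto_setIntegral_mul_of_tendstoUniformlyOn {α ι : Type*} [MeasurableSpace α]
    {μ : Measure α} {l : Filter ι} [l.IsCountablyGenerated] {s K : Set α} {g v : α → ℝ}
    {u : ι → α → ℝ} {M B : ℝ} (hs : MeasurableSet s)
    (hK : MeasurableSet K) (hKμ : μ K ≠ ⊤) (hg : ∀ x ∈ K, |g x| ≤ M)
    (hv : ∀ x ∈ s, |v x| ≤ B) (hu : TendstoUniformlyOn u v l s)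
    (hsupp : ∀ i, ∀ x ∈ s, x ∉ K → u i x = 0)
    (hmeas : ∀ i, AEStronglyMeasurable (fun x => g x * u i x) (μ.restrict s)) :
    Tendsto (fun i => ∫ x in s, g x * u i x ∂μ) l (𝓝 (∫ x in s, g x * v x ∂μ)) := by
  refine tendsto_integral_filter_of_dominated_convergence (K.indicator fun _ => M * (B + 1))
    (Eventually.of_forall hmeas) ?_ ?_ ?_
  · filter_upwards [eventually_abs_le_of_tendstoUniformlyOn hv hu] with i hi
    refine ae_restrict_of_forall_mem hs fun x hx => ?_
    by_cases hxK : x ∈ K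
    · rw [indicator_of_mem hxK, norm_mul]
      exact mul_le_mul (hg x hxK) (hi x hx) (norm_nonneg _) ((abs_nonneg _).trans (hg x hxK))
    · simp [indicator_of_notMem hxK, hsupp i x hx hxK]
  · refine (integrable_indicator_iff hK).2 (integrableOn_const ?_)
    exact ne_top_of_le_ne_top hKμ (Measure.restrict_apply_le s K)
  · exact ae_restrict_of_forall_mem hs fun x hx => (hu.tendsto_at hx).const_mul (g x)

theorem stmt_12_general (a b : ℝ) (f : ℝ → ℝ)
    (hmf : AEMeasurable f (MeasureTheory.volume.restrict (Set.Ioo a b)))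
    (hbf : ∀ c d : ℝ, Set.Icc c d ⊆ Set.Ioo a b → ∃ M, ∀ t ∈ Set.Icc c d, |f t| ≤ M)
    (φn : ℕ → ℝ → ℝ → ℝ) (φ : ℝ → ℝ → ℝ)
    (hφ : IsDynTest a b φ)
    (hmn : ∀ n, AEMeasurable (fun t => φn n t 0)
      (MeasureTheory.volume.restrict (Set.Ioo a b)))
    (hconv : TendstoT a b φn φ) :
    Filter.Tendsto (fun n => ∫ t in Set.Ioo a b, f t * φn n t 0) Filter.atTop
      (nhds (∫ t in Set.Ioo a b, f t * φ t 0)) := by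
  obtain ⟨c, d, hac, -, hdb, hsupp⟩ := hconv.1
  obtain ⟨B, hB⟩ := hφ.1
  obtain ⟨M, hM⟩ := hbf c d (Icc_subset_Ioo hac hdb)
  exact tendsto_setIntegral_mul_of_tendstoUniformlyOn measurableSet_Ioo measurableSet_Icc
    measure_Icc_lt_top.ne hM (fun t ht => hB t ht 0 zero_mem_Jset)
    (hconv.tendstoUniformlyOn zero_mem_Jset) (fun n t _ ht => hsupp n t ht 0 zero_mem_Jset)
    fun n => (hmf.mul (hmn n)).aestronglyMeasurable

/-- the regular distribution `(f, φ) = ∫_I f(t) φ̂(t) dt` associated to a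
measurable, locally bounded function `f` on `I` is a `𝒯`-sequentially continuous
functional (here `φ̂(t) = φ(t)(0)`, which agrees a.e. with the ordinary part of `φ`). -/
theorem stmt_12 (a b : ℝ) (f : ℝ → ℝ)
    (hmf : AEMeasurable f (MeasureTheory.volume.restrict (Set.Ioo a b)))
    (hbf : ∀ c d : ℝ, Set.Icc c d ⊆ Set.Ioo a b → ∃ M, ∀ t ∈ Set.Icc c d, |f t| ≤ M)
    (φn : ℕ → ℝ → ℝ → ℝ) (φ : ℝ → ℝ → ℝ)
    (hφn : ∀ n, IsDynTest a b (φn n)) (hφ : IsDynTest a b φ)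
    (hmn : ∀ n, AEMeasurable (fun t => φn n t 0)
      (MeasureTheory.volume.restrict (Set.Ioo a b)))
    (hm : AEMeasurable (fun t => φ t 0) (MeasureTheory.volume.restrict (Set.Ioo a b)))
    (hconv : TendstoT a b φn φ) :
    Filter.Tendsto (fun n => ∫ t in Set.Ioo a b, f t * φn n t 0) Filter.atTop
      (nhds (∫ t in Set.Ioo a b, f t * φ t 0)) :=
  stmt_12_general a b f hmf hbf φn φ hφ hmn hconv
end
end
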